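/- arXiv:1608.05548 — 4 statements merged into one kernel-verified Lean document; each statement's English description precedes it below -/
import Mathlib

section
/- Goal-oriented reduction preserves minimal traces (Theorem 1): Let (Σ,S,T) be an automata network, s a global state with s(a) = a_0 for every a ∈ Σ, and g_⊤ ∈ S(g) a goal local state with g_0 ≠ g_⊤. Then for every trace π from s that is minimal w.r.t. g_⊤ reachability, every transition occurring in π belongs to tr(B), i.e., tr(π) ⊆ tr(B). -/
/-!
Automata networks (ANs), steps, traces, minimal traces, local causality analysis
and the goal-oriented reduction, following Paulevé, "Goal-Oriented Reduction of
Automata Networks".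
-/

universe u v

/-- An automata network: a finite set of automata identifiers, each with a
finite set of local states.  (The transition relation is given separately,
as a `TransMap`.) -/
structure AN : Type (max (u + 1) (v + 1)) where
  /-- automata identifiers -/
  Auto : Type u
  /-- local states of each automaton -/
  LS : Auto → Type v
  [decAuto : DecidableEq Auto]
  [fintypeAuto : Fintype Auto]
  [decLS : ∀ a, DecidableEq (LS a)]
  [fintypeLS : ∀ a, Fintype (LS a)]

attribute [instance] AN.decAuto AN.fintypeAuto AN.decLS AN.fintypeLS

namespace AN

variable (N : AN)

/-- The type of all local states, each recording its automaton. -/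
abbrev LSt := Σ a : N.Auto, N.LS a

/-- Global states: one local state per automaton. -/
abbrev GState := ∀ a : N.Auto, N.LS a

/-- A local transition of automaton `a`: an origin and a destination local
state of `a` (distinct), together with an enabling condition giving at most
one local state per automaton, and none for `a` itself. -/
structure Trans (a : N.Auto) where
  orig : N.LS a
  dest : N.LS a
  orig_ne_dest : orig ≠ dest
  enab : ∀ b : N.Auto, Option (N.LS b)
  enab_self : enab a = none

/-- The transition relation `T`: a set of local transitions per automaton. -/
abbrev TransMap := ∀ a : N.Auto, Set (N.Trans a)

variable {N}

/-- Pre-condition `•t` of a local transition. -/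
def Trans.preSet {a : N.Auto} (t : N.Trans a) : Set N.LSt :=
  insert ⟨a, t.orig⟩ {p | t.enab p.1 = some p.2}

/-- Post-condition `t•` of a local transition. -/
def Trans.postSet {a : N.Auto} (t : N.Trans a) : Set N.LSt :=
  insert ⟨a, t.dest⟩ {p | t.enab p.1 = some p.2}

variable (N)

/-- A step: a set of local transitions with at most one transition per
automaton. -/
abbrev Step := ∀ a : N.Auto, Option (N.Trans a)

variable {N}

/-- Pre-condition `•τ` of a step. -/
def Step.pre (τ : Step N) : Set N.LSt :=
  ⋃ (b : N.Auto), ⋃ (t : N.Trans b), ⋃ (_ : τ b = some t), t.preSet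

/-- Post-condition `τ•` of a step. -/
def Step.post (τ : Step N) : Set N.LSt :=
  (⋃ (b : N.Auto), ⋃ (t : N.Trans b), ⋃ (_ : τ b = some t), t.postSet) \
    {p | ∃ t : N.Trans p.1, τ p.1 = some t ∧ p.2 = t.orig}

/-- `σ` is a sub-step of `τ` (inclusion of sets of transitions). -/
def Step.Sub (σ τ : Step N) : Prop :=
  ∀ ⦃a : N.Auto⦄ ⦃t : N.Trans a⦄, σ a = some t → τ a = some t

/-- The step only uses transitions of `T`. -/
def Step.Wf (T : TransMap N) (τ : Step N) : Prop :=
  ∀ ⦃a : N.Auto⦄ ⦃t : N.Trans a⦄, τ a = some t → t ∈ T a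

/-- A step `τ` is playable in `s` iff `•τ ⊆ s`. -/
def Playable (s : GState N) (τ : Step N) : Prop :=
  ∀ p ∈ τ.pre, s p.1 = p.2

/-- `s·τ`: the global state after applying step `τ` in `s`. -/
def applyStep (s : GState N) (τ : Step N) : GState N :=
  fun a => (τ a).elim (s a) Trans.dest

/-- The global state after applying a sequence of steps. -/
def applyTrace (s : GState N) (π : List (Step N)) : GState N :=
  π.foldl applyStep s

/-- `π` is a trace from `s` (of the network with transitions `T`): a finite
sequence of successively playable steps. -/
def IsTrace (T : TransMap N) (s : GState N) (π : List (Step N)) : Prop :=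
  ∀ i (h : i < π.length),
    (π.get ⟨i, h⟩).Wf T ∧ Playable (applyTrace s (π.take i)) (π.get ⟨i, h⟩)

/-- Post-condition `post(π)` of a trace: `⟨a, x⟩ ∈ post(π)` iff `⟨a, x⟩` is in
the post-condition of some step and no later step has a local state of
automaton `a` in its post-condition. -/
def tracePost (π : List (Step N)) : Set N.LSt :=
  {p | ∃ n, ∃ hn : n < π.length, p ∈ (π.get ⟨n, hn⟩).post ∧
    ∀ m (hm : m < π.length), n < m →
      ∀ x : N.LS p.1, (⟨p.1, x⟩ : N.LSt) ∉ (π.get ⟨m, hm⟩).post}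

/-- Local states of automaton `a` in the post-condition of a trace. -/
def postProj (π : List (Step N)) (a : N.Auto) : Set (N.LS a) :=
  {x | (⟨a, x⟩ : N.LSt) ∈ tracePost π}

/-- `tr(π)`: the set of transitions composing a trace. -/
def traceTrans (π : List (Step N)) : Set (Σ a : N.Auto, N.Trans a) :=
  {q | ∃ τ ∈ π, τ q.1 = some q.2}

/-- `ϖ` is a sub-trace of `π`: there is a strictly order-preserving injection
`φ` of the steps of `ϖ` into those of `π` with `ϖ^i ⊆ π^{φ(i)}`. -/
def SubTrace (ϖ π : List (Step N)) : Prop :=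
  ∃ φ : Fin ϖ.length → Fin π.length, StrictMono φ ∧
    ∀ i : Fin ϖ.length, (ϖ.get i).Sub (π.get (φ i))

/-- `π` is a minimal trace from `s` w.r.t. the reachability of the local state
`p`. -/
def MinimalTrace (T : TransMap N) (s : GState N) (p : N.LSt)
    (π : List (Step N)) : Prop :=
  IsTrace T s π ∧ p ∈ tracePost π ∧
    ¬ ∃ ϖ : List (Step N), IsTrace T s ϖ ∧ ϖ ≠ π ∧ ϖ.length ≤ π.length ∧
      p ∈ tracePost ϖ ∧ SubTrace ϖ π

/-- The local state `p` is reachable from `s`. -/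
def Reachable (T : TransMap N) (s : GState N) (p : N.LSt) : Prop :=
  s p.1 = p.2 ∨ ∃ π : List (Step N), IsTrace T s π ∧ p ∈ tracePost π

/-- `η ∈ local-paths(a_i ↝ a_j)`: local acyclic paths of automaton `a` from
`i` to `j`, using transitions of `T`. -/
def IsLocalPath (T : TransMap N) {a : N.Auto} (i j : N.LS a)
    (η : List (N.Trans a)) : Prop :=
  (∀ t ∈ η, t ∈ T a) ∧
    ((i = j ∧ η = []) ∨
     (i ≠ j ∧ ∃ hne : η ≠ [],
       (η.head hne).orig = i ∧ (η.getLast hne).dest = j ∧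
       (∀ n : ℕ, ∀ h : n + 1 < η.length,
         (η.get ⟨n, Nat.lt_of_succ_lt h⟩).dest = (η.get ⟨n + 1, h⟩).orig) ∧
       (∀ n m : Fin η.length, m < n → (η.get n).dest ≠ (η.get m).orig)))

variable (N)

/-- Objectives `a_i ↝ a_j`: pairs of local states of a same automaton. -/
abbrev Obj := Σ a : N.Auto, N.LS a × N.LS a

variable {N}

/-- The operator `F` on sets of objectives: `a_i ↝ a_j ∈ F(Ω)` iff some local
acyclic path from `i` to `j` has all the objectives from the initial state `s`
to its enabling conditions already in `Ω`. -/
def Fop (T : TransMap N) (s : GState N) (Ω : Set (Obj N)) : Set (Obj N) :=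
  {P | ∃ η : List (N.Trans P.1), IsLocalPath T P.2.1 P.2.2 η ∧
    ∀ t ∈ η, ∀ (b : N.Auto) (k : N.LS b), t.enab b = some k →
      (⟨b, (s b, k)⟩ : Obj N) ∈ Ω}

/-- `rcsol_s(P)` (with validity given by the set `Ω` of valid objectives):
local acyclic paths for `P` whose enabling conditions only involve valid
objectives from the initial state `s`. -/
def rcsol (T : TransMap N) (s : GState N) (Ω : Set (Obj N)) (P : Obj N) :
    Set (List (N.Trans P.1)) :=
  {η | IsLocalPath T P.2.1 P.2.2 η ∧
    ∀ t ∈ η, ∀ (b : N.Auto) (k : N.LS b), t.enab b = some k →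
      (⟨b, (s b, k)⟩ : Obj N) ∈ Ω}

/-- `tr(rcsol_s(P))`: the transitions of the filtered local paths of `P`. -/
def rcsolTr (T : TransMap N) (s : GState N) (Ω : Set (Obj N)) (P : Obj N) :
    Set (N.Trans P.1) :=
  {t | ∃ η ∈ rcsol T s Ω P, t ∈ η}

/-- `tr(B)`: the transitions of the filtered local paths of the objectives
in `B`. -/
def trB (T : TransMap N) (s : GState N) (Ω : Set (Obj N)) (B : Set (Obj N)) :
    Set (Σ a : N.Auto, N.Trans a) :=
  {q | ∃ i j : N.LS q.1, (⟨q.1, (i, j)⟩ : Obj N) ∈ B ∧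
    q.2 ∈ rcsolTr T s Ω (⟨q.1, (i, j)⟩ : Obj N)}

/-- The closure conditions defining the set `B` of collected objectives for
the goal `g_⊤` from the initial state `s` (so that `a_0 = s a` for each
automaton `a`):
(1) `g_0 ↝ g_⊤ ∈ B`;
(2) if `b_j →^ℓ b_k ∈ tr(B)` then `a_0 ↝ a_i ∈ B` for every `a_i ∈ ℓ`;
(3) if `b_j →^ℓ b_k ∈ tr(B)` and `b_⋆ ↝ b_i ∈ B` then `b_k ↝ b_i ∈ B`. -/
def BClosed (T : TransMap N) (s : GState N) (Ω : Set (Obj N))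
    (g : N.Auto) (gtop : N.LS g) (B : Set (Obj N)) : Prop :=
  (⟨g, (s g, gtop)⟩ : Obj N) ∈ B ∧
  (∀ (b : N.Auto) (t : N.Trans b),
      (⟨b, t⟩ : Σ a : N.Auto, N.Trans a) ∈ trB T s Ω B →
    ∀ (a : N.Auto) (i : N.LS a), t.enab a = some i →
      (⟨a, (s a, i)⟩ : Obj N) ∈ B) ∧
  (∀ (b : N.Auto) (t : N.Trans b),
      (⟨b, t⟩ : Σ a : N.Auto, N.Trans a) ∈ trB T s Ω B →
    ∀ bs bi : N.LS b, (⟨b, (bs, bi)⟩ : Obj N) ∈ B →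
      (⟨b, (t.dest, bi)⟩ : Obj N) ∈ B)

end AN

/-!
A move of automaton `b` in `π` is kept with respect to a finite set of demands `(b, u)`
("`b` must be at time `u` in the state it has in `π`") when it survives the loop erasure of
`b`'s moves between two successive demand times. If the goal is demanded at the final time
and every condition of a kept move is demanded at the time of that move, the kept moves form
a sub-trace of `π` that still reaches `g_⊤`, so by minimality every move of `π` is kept.
Such demands are obtained by iterating from the goal demand. Each loop-erased segment is a
local path whose conditions are reached states, hence valid, so it lies in `rcsol`; by
induction along the iteration every demanded objective lies in `B`, and every kept move in
`tr(B)`.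
-/

namespace AN

open scoped Classical

variable {N : AN}

section StepSequences

/-- The `n`-th step of `π`, and the empty step beyond its end. -/
noncomputable def stepAt (π : List (Step N)) (n : ℕ) : Step N :=
  π.getD n fun _ => none

/-- The global state before step `n` of `π`, i.e. after its first `n` steps. -/
noncomputable def stateAt (s : GState N) (π : List (Step N)) : ℕ → GState N
  | 0 => s
  | n + 1 => applyStep (stateAt s π n) (stepAt π n)

variable {s : GState N} {π : List (Step N)}

lemma stepAt_of_lt {n : ℕ} (h : n < π.length) : stepAt π n = π.get ⟨n, h⟩ := by
  simp [stepAt, List.getD_eq_getElem?_getD, h]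

lemma stepAt_of_length_le {n : ℕ} (h : π.length ≤ n) : stepAt π n = fun _ => none := by
  simp [stepAt, List.getD_eq_getElem?_getD, h]

lemma lt_length_of_stepAt_eq_some {n : ℕ} {a : N.Auto} {t : N.Trans a}
    (h : stepAt π n a = some t) : n < π.length := by
  by_contra hn
  simp [stepAt_of_length_le (not_lt.1 hn)] at h

lemma stateAt_succ_of_some {n : ℕ} {a : N.Auto} {t : N.Trans a}
    (h : stepAt π n a = some t) : stateAt s π (n + 1) a = t.dest := by
  simp [stateAt, applyStep, h]

lemma stateAt_succ_of_none {n : ℕ} {a : N.Auto} (h : stepAt π n a = none) :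
    stateAt s π (n + 1) a = stateAt s π n a := by
  simp [stateAt, applyStep, h]

lemma stateAt_eq_applyTrace (n : ℕ) : stateAt s π n = applyTrace s (π.take n) := by
  simp only [applyTrace]
  induction n with
  | zero => rfl
  | succ n ih =>
    rcases lt_or_ge n π.length with h | h
    · rw [List.take_add_one, List.getElem?_eq_getElem h, Option.toList_some,
        List.foldl_append, ← ih]
      simp [stateAt, stepAt_of_lt h]
    · have hfull : π.take (n + 1) = π.take n := by
        rw [List.take_of_length_le h, List.take_of_length_le (by omega)]
      rw [hfull, ← ih]
      funext a
      exact stateAt_succ_of_none (by rw [stepAt_of_length_le h])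

lemma stateAt_eq_of_forall_none {a : N.Auto} {v u : ℕ} (hvu : v ≤ u)
    (h : ∀ m, v ≤ m → m < u → stepAt π m a = none) :
    stateAt s π u a = stateAt s π v a := by
  induction u, hvu using Nat.le_induction with
  | base => rfl
  | succ u hvu ih =>
    rw [stateAt_succ_of_none (h u hvu (by omega)), ih fun m hm hmu => h m hm (by omega)]

end StepSequences

section Conditions

lemma playable_iff {σ : GState N} {τ : Step N} :
    Playable σ τ ↔ ∀ b t, τ b = some t → σ b = t.orig ∧ ∀ c k, t.enab c = some k → σ c = k := by
  simp only [Playable, Step.pre, Trans.preSet, Set.mem_iUnion, Set.mem_insert_iff,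
    Set.mem_ofPred_eq]
  constructor
  · intro h b t hbt
    exact ⟨h _ ⟨b, t, hbt, Or.inl rfl⟩, fun c k hck => h ⟨c, k⟩ ⟨b, t, hbt, Or.inr hck⟩⟩
  · rintro h p ⟨b, t, hbt, rfl | hp⟩
    exacts [(h b t hbt).1, (h b t hbt).2 _ _ hp]

lemma mem_post_iff {τ : Step N} {c : N.Auto} {x : N.LS c} :
    (⟨c, x⟩ : N.LSt) ∈ τ.post ↔
      ((∃ t, τ c = some t ∧ t.dest = x) ∨ ∃ b t, τ b = some t ∧ t.enab c = some x) ∧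
        ∀ t, τ c = some t → t.orig ≠ x := by
  simp only [Step.post, Trans.postSet, Set.mem_sdiff, Set.mem_iUnion, Set.mem_insert_iff,
    Set.mem_ofPred_eq, Sigma.mk.inj_iff, not_exists, not_and]
  refine and_congr ⟨?_, ?_⟩ (forall₂_congr fun _ _ => ne_comm)
  · rintro ⟨b, t, hbt, ⟨rfl, hx⟩ | hx⟩
    exacts [Or.inl ⟨t, hbt, (eq_of_heq hx).symm⟩, Or.inr ⟨b, t, hbt, hx⟩]
  · rintro (⟨t, ht, rfl⟩ | ⟨b, t, hbt, hx⟩)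
    exacts [⟨c, t, ht, Or.inl ⟨rfl, HEq.rfl⟩⟩, ⟨b, t, hbt, Or.inr hx⟩]

lemma mem_post_of_eq_some {τ : Step N} {a : N.Auto} {t : N.Trans a} (h : τ a = some t) :
    (⟨a, t.dest⟩ : N.LSt) ∈ τ.post :=
  mem_post_iff.2 ⟨Or.inl ⟨t, h, rfl⟩, fun t' ht' => by
    obtain rfl := Option.some.inj (ht'.symm.trans h); exact t'.orig_ne_dest⟩

end Conditions

section Traces

variable {T : TransMap N} {s : GState N} {π : List (Step N)}

lemma isTrace_iff : IsTrace T s π ↔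
    ∀ n < π.length, (stepAt π n).Wf T ∧ Playable (stateAt s π n) (stepAt π n) := by
  refine forall₂_congr fun n hn => ?_
  rw [stepAt_of_lt hn, stateAt_eq_applyTrace]

namespace IsTrace

variable {n : ℕ} {a : N.Auto}

lemma mem_transMap (htr : IsTrace T s π) {t : N.Trans a} (h : stepAt π n a = some t) :
    t ∈ T a :=
  (isTrace_iff.1 htr n (lt_length_of_stepAt_eq_some h)).1 h

lemma playable_stateAt (htr : IsTrace T s π) {b : N.Auto} {t : N.Trans b}
    (h : stepAt π n b = some t) :
    stateAt s π n b = t.orig ∧ ∀ c k, t.enab c = some k → stateAt s π n c = k :=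
  playable_iff.1 (isTrace_iff.1 htr n (lt_length_of_stepAt_eq_some h)).2 b t h

lemma stateAt_succ_of_mem_post (htr : IsTrace T s π) {x : N.LS a}
    (h : (⟨a, x⟩ : N.LSt) ∈ (stepAt π n).post) :
    stateAt s π (n + 1) a = x := by
  obtain ⟨hx | ⟨b, t, hbt, hx⟩, hx_orig⟩ := mem_post_iff.1 h
  · obtain ⟨t, ht, rfl⟩ := hx
    exact stateAt_succ_of_some ht
  · have hstate := (htr.playable_stateAt hbt).2 a x hx
    cases ha : stepAt π n a with
    | none => rwa [stateAt_succ_of_none ha]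
    | some t' => exact absurd ((htr.playable_stateAt ha).1.symm.trans hstate) (hx_orig t' ha)

lemma stateAt_length_of_mem_tracePost (htr : IsTrace T s π) {x : N.LS a}
    (h : (⟨a, x⟩ : N.LSt) ∈ tracePost π) :
    stateAt s π π.length a = x := by
  obtain ⟨n, hn, hpost, hlast⟩ := h
  rw [← stepAt_of_lt hn] at hpost
  rw [← htr.stateAt_succ_of_mem_post hpost]
  refine stateAt_eq_of_forall_none hn fun m hnm hm => ?_
  cases ha : stepAt π m a with
  | none => rfl
  | some t => exact absurd (stepAt_of_lt hm ▸ mem_post_of_eq_some ha) (hlast m hm hnm t.dest)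

/-- The witness is the last step whose post-condition mentions `a`. -/
lemma mem_tracePost_of_ne (htr : IsTrace T s π) (h : stateAt s π π.length a ≠ s a) :
    (⟨a, stateAt s π π.length a⟩ : N.LSt) ∈ tracePost π := by
  set P : ℕ → Prop := fun m => ∃ y, (⟨a, y⟩ : N.LSt) ∈ (stepAt π m).post
  have hmoves : ∃ m < π.length, P m := by
    by_contra! hnone
    refine h (stateAt_eq_of_forall_none (Nat.zero_le _) fun m _ hm => ?_)
    cases ha : stepAt π m a with
    | none => rfl
    | some t => exact absurd ⟨t.dest, mem_post_of_eq_some ha⟩ (hnone m hm)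
  obtain ⟨m, hm, hPm⟩ := hmoves
  set n := Nat.findGreatest P π.length
  obtain ⟨y, hy⟩ : P n := Nat.findGreatest_spec hm.le hPm
  have hn : n < π.length := by
    rcases (mem_post_iff.1 hy).1 with ⟨t, ht, -⟩ | ⟨b, t, ht, -⟩ <;>
      exact lt_length_of_stepAt_eq_some ht
  have hlast : ∀ k, n < k → k < π.length → ¬ P k := fun k hnk hk =>
    Nat.findGreatest_is_greatest hnk hk.le
  have hfinal : stateAt s π π.length a = y := by
    rw [← htr.stateAt_succ_of_mem_post hy]
    refine stateAt_eq_of_forall_none hn fun k hnk hk => ?_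
    cases ha : stepAt π k a with
    | none => rfl
    | some t => exact absurd ⟨t.dest, mem_post_of_eq_some ha⟩ (hlast k hnk hk)
  refine ⟨n, hn, ?_, fun k hk hnk z hz => hlast k hnk hk ⟨z, ?_⟩⟩
  · rw [← stepAt_of_lt hn, hfinal]; exact hy
  · rwa [stepAt_of_lt hk]

end IsTrace

end Traces

section SimplePaths

/-- Chains of local transitions of `a` from `x` to `y` in which no transition leads back to
the origin of an earlier one; an inductive form of the acyclic paths of `IsLocalPath`. -/
inductive SimplePath {a : N.Auto} : N.LS a → N.LS a → List (N.Trans a) → Prop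
  | nil (x : N.LS a) : SimplePath x x []
  | cons (t : N.Trans a) {y : N.LS a} {l : List (N.Trans a)} :
      SimplePath t.dest y l → (∀ u ∈ l, u.dest ≠ t.orig) → SimplePath t.orig y (t :: l)

namespace SimplePath

variable {a : N.Auto} {x y : N.LS a} {l : List (N.Trans a)}

lemma eq_of_nil (h : SimplePath x y []) : x = y := by
  cases h; rfl

lemma getLast_dest (h : SimplePath x y l) (hl : l ≠ []) : (l.getLast hl).dest = y := by
  induction h with
  | nil => contradiction
  | cons t hp _ ih =>
    rcases eq_or_ne ‹List (N.Trans a)› [] with rfl | hne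
    · exact hp.eq_of_nil
    · rw [List.getLast_cons hne]; exact ih hne

lemma ne_of_ne_nil (h : SimplePath x y l) (hl : l ≠ []) : x ≠ y := by
  cases h with
  | nil => contradiction
  | cons t hp hacyc =>
    rcases eq_or_ne ‹List (N.Trans a)› [] with rfl | hne
    · rw [← hp.eq_of_nil]; exact t.orig_ne_dest
    · rw [← hp.getLast_dest hne]; exact (hacyc _ (List.getLast_mem hne)).symm

lemma orig_eq_of_mem_head? {u : N.Trans a} (h : SimplePath x y l) (hu : u ∈ l.head?) :
    u.orig = x := by
  cases h with
  | nil => simp at hu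
  | cons => simp only [List.head?_cons, Option.mem_def, Option.some.injEq] at hu; rw [hu]

lemma isChain (h : SimplePath x y l) : l.IsChain fun u v => u.dest = v.orig := by
  induction h with
  | nil => exact List.isChain_nil
  | cons t hp _ ih => exact List.isChain_cons.2 ⟨fun u hu => (hp.orig_eq_of_mem_head? hu).symm, ih⟩

lemma pairwise (h : SimplePath x y l) : l.Pairwise fun u v => v.dest ≠ u.orig := by
  induction h with
  | nil => exact List.Pairwise.nil
  | cons t _ hacyc ih => exact ih.cons hacyc

lemma isLocalPath (h : SimplePath x y l) (T : TransMap N) (hT : ∀ t ∈ l, t ∈ T a) :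
    IsLocalPath T x y l := by
  refine ⟨hT, ?_⟩
  rcases eq_or_ne l [] with rfl | hl
  · exact Or.inl ⟨h.eq_of_nil, rfl⟩
  refine Or.inr ⟨h.ne_of_ne_nil hl, hl, ?_, h.getLast_dest hl, fun n hn => ?_, fun n m hmn => ?_⟩
  · exact h.orig_eq_of_mem_head? (List.head?_eq_some_head hl)
  · simpa using List.isChain_iff_getElem.1 h.isChain n hn
  · exact List.pairwise_iff_get.1 h.pairwise m n hmn

end SimplePath

end SimplePaths

lemma stateAt_along_simplePath {s : GState N} {σ : List (Step N)} {b : N.Auto} :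
    ∀ {l : List (ℕ × N.Trans b)} {v u : ℕ} {x y : N.LS b},
      SimplePath x y (l.map Prod.snd) → l.Pairwise (fun p q => p.1 < q.1) →
      (∀ p ∈ l, v ≤ p.1 ∧ p.1 < u) → v ≤ u →
      (∀ i t, v ≤ i → i < u → (stepAt σ i b = some t ↔ (i, t) ∈ l)) →
      stateAt s σ v b = x →
      (∀ p ∈ l, stateAt s σ p.1 b = p.2.orig) ∧ stateAt s σ u b = y
  | [], v, u, x, y, hpath, _, _, hvu, hmoves, hx => by
    refine ⟨by simp, ?_⟩
    rw [← hpath.eq_of_nil, ← hx]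
    refine stateAt_eq_of_forall_none hvu fun m hvm hmu => ?_
    cases h : stepAt σ m b with
    | none => rfl
    | some t => simpa using (hmoves m t hvm hmu).1 h
  | (i, t) :: l, v, u, x, y, hpath, hsorted, hbounds, _, hmoves, hx => by
    obtain ⟨hvi, hiu⟩ := hbounds (i, t) List.mem_cons_self
    obtain ⟨hlater, hsorted⟩ := List.pairwise_cons.1 hsorted
    rcases hpath with _ | ⟨_, hpath, -⟩
    have hi : stateAt s σ i b = t.orig := by
      rw [← hx]
      refine stateAt_eq_of_forall_none hvi fun m hvm hmi => ?_
      cases h : stepAt σ m b with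
      | none => rfl
      | some t' =>
        rcases List.mem_cons.1 ((hmoves m t' hvm (by omega)).1 h) with he | hm
        · cases he; omega
        · have := hlater _ hm; omega
    have hnext := stateAt_succ_of_some (s := s) ((hmoves i t hvi hiu).2 List.mem_cons_self)
    have ih := stateAt_along_simplePath hpath hsorted
      (fun p hp => ⟨hlater p hp, (hbounds p (List.mem_cons_of_mem _ hp)).2⟩) hiu
      (fun i' t' hi' hi'u => by
        rw [hmoves i' t' (by omega) hi'u, List.mem_cons]
        exact or_iff_right fun he => by cases he; omega)
      hnext
    exact ⟨fun p hp => (List.mem_cons.1 hp).elim (· ▸ hi) (ih.1 p), ih.2⟩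

section LoopErasure

variable (s : GState N) (π : List (Step N))

noncomputable def lastVisit (b : N.Auto) (v u : ℕ) : ℕ :=
  Nat.findGreatest (fun i => stateAt s π i b = stateAt s π v b) u

variable {s π} {b : N.Auto} {v u : ℕ}

lemma le_lastVisit (hvu : v ≤ u) : v ≤ lastVisit s π b v u :=
  Nat.le_findGreatest hvu rfl

lemma stateAt_lastVisit (hvu : v ≤ u) :
    stateAt s π (lastVisit s π b v u) b = stateAt s π v b :=
  Nat.findGreatest_spec (P := fun i => stateAt s π i b = stateAt s π v b) hvu rfl

lemma stateAt_ne_of_lastVisit_lt (hne : stateAt s π v b ≠ stateAt s π u b) {m : ℕ}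
    (hm : lastVisit s π b v u < m) (hmu : m ≤ u) : stateAt s π m b ≠ stateAt s π v b := by
  rcases hmu.lt_or_eq with hmu | rfl
  · exact Nat.findGreatest_is_greatest hm hmu.le
  · exact hne.symm

lemma lastVisit_lt (hvu : v ≤ u) (hne : stateAt s π v b ≠ stateAt s π u b) :
    lastVisit s π b v u < u := by
  refine (Nat.findGreatest_le u).lt_of_ne fun h => hne ?_
  have := stateAt_lastVisit (s := s) (π := π) (b := b) hvu
  rw [lastVisit, h] at this
  exact this.symm

variable (s π) in
/-- Loop erasure of the moves of `b` during `[v, u)`: from each reached state, jump to its last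
visit before time `u` and keep the move made there. -/
noncomputable def erasedPath (b : N.Auto) (v u : ℕ) : List (ℕ × N.Trans b) :=
  if v < u ∧ stateAt s π v b ≠ stateAt s π u b then
    match stepAt π (lastVisit s π b v u) b with
    | none => [] -- unreachable: `b` leaves its state right after its last visit
    | some t => (lastVisit s π b v u, t) :: erasedPath b (lastVisit s π b v u + 1) u
  else []
termination_by u - v
decreasing_by
  obtain ⟨hvu, hne⟩ : v < u ∧ stateAt s π v b ≠ stateAt s π u b := ‹_›
  have := le_lastVisit (s := s) (π := π) (b := b) hvu.le
  have := lastVisit_lt hvu.le hne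
  omega

lemma erasedPath_of_stepAt_eq_some (h : v < u ∧ stateAt s π v b ≠ stateAt s π u b)
    {t : N.Trans b} (ht : stepAt π (lastVisit s π b v u) b = some t) :
    erasedPath s π b v u =
      (lastVisit s π b v u, t) :: erasedPath s π b (lastVisit s π b v u + 1) u := by
  rw [erasedPath, if_pos h]
  split <;> simp_all

lemma mem_erasedPath {p : ℕ × N.Trans b} (hp : p ∈ erasedPath s π b v u) :
    v ≤ p.1 ∧ p.1 < u ∧ stepAt π p.1 b = some p.2 := by
  induction v using erasedPath.induct s π b u with
  | case1 v h hnone => simp [erasedPath, h, hnone] at hp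
  | case2 v h t ht ih =>
    have hv := le_lastVisit (s := s) (π := π) (b := b) h.1.le
    rw [erasedPath_of_stepAt_eq_some h ht, List.mem_cons] at hp
    rcases hp with rfl | hp
    · exact ⟨hv, lastVisit_lt h.1.le h.2, ht⟩
    · obtain ⟨h1, h2, h3⟩ := ih hp
      exact ⟨by omega, h2, h3⟩
  | case3 v h => simp [erasedPath, h] at hp

lemma erasedPath_pairwise : (erasedPath s π b v u).Pairwise fun p q => p.1 < q.1 := by
  induction v using erasedPath.induct s π b u with
  | case1 v h hnone => simp [erasedPath, h, hnone]
  | case2 v h t ht ih =>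
    rw [erasedPath_of_stepAt_eq_some h ht]
    exact ih.cons fun q hq => (mem_erasedPath hq).1
  | case3 v h => simp [erasedPath, h]

lemma simplePath_erasedPath {T : TransMap N} (htr : IsTrace T s π) (hvu : v ≤ u) :
    SimplePath (stateAt s π v b) (stateAt s π u b) ((erasedPath s π b v u).map Prod.snd) := by
  induction v using erasedPath.induct s π b u with
  | case1 v h hnone =>
    refine absurd ?_ (stateAt_ne_of_lastVisit_lt h.2 (Nat.lt_succ_self _) (lastVisit_lt hvu h.2))
    rw [stateAt_succ_of_none hnone, stateAt_lastVisit hvu]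
  | case2 v h t ht ih =>
    have hlv := lastVisit_lt hvu h.2
    have horig : t.orig = stateAt s π v b := by
      rw [← (htr.playable_stateAt ht).1, stateAt_lastVisit hvu]
    rw [erasedPath_of_stepAt_eq_some h ht, List.map_cons, ← horig]
    refine .cons t (stateAt_succ_of_some ht ▸ ih hlv) fun w hw => ?_
    obtain ⟨p, hp, rfl⟩ := List.mem_map.1 hw
    obtain ⟨hp1, hp2, hp3⟩ := mem_erasedPath hp
    rw [horig, ← stateAt_succ_of_some hp3]
    exact stateAt_ne_of_lastVisit_lt h.2 (by omega) hp2
  | case3 v h =>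
    have heq : stateAt s π v b = stateAt s π u b := by
      by_contra hne; exact h ⟨hvu.lt_of_ne fun he => hne (he ▸ rfl), hne⟩
    rw [erasedPath, if_neg h, List.map_nil, heq]
    exact .nil _

end LoopErasure

section Validity

variable {T : TransMap N} {s : GState N} {π : List (Step N)} {b : N.Auto} {v u : ℕ}

lemma isLocalPath_erasedPath (htr : IsTrace T s π) (hvu : v ≤ u) :
    IsLocalPath T (stateAt s π v b) (stateAt s π u b) ((erasedPath s π b v u).map Prod.snd) :=
  (simplePath_erasedPath htr hvu).isLocalPath T fun t ht => by
    obtain ⟨p, hp, rfl⟩ := List.mem_map.1 ht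
    exact htr.mem_transMap (mem_erasedPath hp).2.2

lemma exists_stateAt_eq_of_mem_erasedPath (htr : IsTrace T s π) {t : N.Trans b}
    (ht : t ∈ (erasedPath s π b v u).map Prod.snd) {c : N.Auto} {k : N.LS c}
    (hk : t.enab c = some k) : ∃ m < u, stateAt s π m c = k := by
  obtain ⟨p, hp, rfl⟩ := List.mem_map.1 ht
  obtain ⟨-, hpu, hstep⟩ := mem_erasedPath hp
  exact ⟨p.1, hpu, (htr.playable_stateAt hstep).2 c k hk⟩

variable {Ω : Set (Obj N)}

/-- The loop erasure of the moves of `c` up to time `n` witnesses validity, its conditions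
being reached earlier. -/
lemma objective_mem_of_Fop_subset (htr : IsTrace T s π) (hΩ : Fop T s Ω ⊆ Ω) (n : ℕ)
    (c : N.Auto) : (⟨c, (s c, stateAt s π n c)⟩ : Obj N) ∈ Ω := by
  induction n using Nat.strong_induction_on generalizing c with
  | _ n ih =>
    refine hΩ ⟨_, isLocalPath_erasedPath htr (Nat.zero_le n), fun t ht d k hk => ?_⟩
    obtain ⟨m, hm, rfl⟩ := exists_stateAt_eq_of_mem_erasedPath htr ht hk
    exact ih m hm d

lemma erasedPath_mem_rcsol (htr : IsTrace T s π) (hΩ : Fop T s Ω ⊆ Ω) (hvu : v ≤ u) :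
    (erasedPath s π b v u).map Prod.snd ∈
      rcsol T s Ω ⟨b, (stateAt s π v b, stateAt s π u b)⟩ := by
  refine ⟨isLocalPath_erasedPath htr hvu, fun t ht c k hk => ?_⟩
  obtain ⟨m, -, rfl⟩ := exists_stateAt_eq_of_mem_erasedPath htr ht hk
  exact objective_mem_of_Fop_subset htr hΩ m c

lemma mem_trB_of_mem_erasedPath (htr : IsTrace T s π) (hΩ : Fop T s Ω ⊆ Ω) {B : Set (Obj N)}
    (hB : (⟨b, (stateAt s π v b, stateAt s π u b)⟩ : Obj N) ∈ B) {p : ℕ × N.Trans b}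
    (hp : p ∈ erasedPath s π b v u) : (⟨b, p.2⟩ : Σ a, N.Trans a) ∈ trB T s Ω B := by
  obtain ⟨hvp, hpu, -⟩ := mem_erasedPath hp
  exact ⟨_, _, hB, _, erasedPath_mem_rcsol htr hΩ (by omega), List.mem_map_of_mem hp⟩

end Validity

section Demands

variable (D : Finset (N.Auto × ℕ)) (b : N.Auto)

def IsBoundary (v : ℕ) : Prop := v = 0 ∨ (b, v) ∈ D

def Consecutive (v u : ℕ) : Prop :=
  IsBoundary D b v ∧ (b, u) ∈ D ∧ v < u ∧ ∀ w, (b, w) ∈ D → v < w → u ≤ w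

variable {D b} {v u : ℕ}

lemma Consecutive.unique {v' u' i : ℕ} (h : Consecutive D b v u) (h' : Consecutive D b v' u')
    (hvi : v ≤ i) (hiu : i < u) (hvi' : v' ≤ i) (hiu' : i < u') : v = v' ∧ u = u' := by
  obtain ⟨hv, hu, -, hnext⟩ := h
  obtain ⟨hv', hu', -, hnext'⟩ := h'
  have hv_le : ∀ {v₁ v₂ u₂ : ℕ}, IsBoundary D b v₁ → v₁ ≤ i → i < u₂ →
      (∀ w, (b, w) ∈ D → v₂ < w → u₂ ≤ w) → v₁ ≤ v₂ := fun hb h1 h2 hn => by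
    by_contra hlt
    rcases hb with rfl | hb
    · omega
    · have := hn _ hb (by omega); omega
  exact ⟨le_antisymm (hv_le hv hvi hiu' hnext') (hv_le hv' hvi' hiu hnext),
    le_antisymm (hnext _ hu' (by omega)) (hnext' _ hu (by omega))⟩

lemma exists_consecutive (hu : (b, u) ∈ D) (hpos : 0 < u) : ∃ v, Consecutive D b v u := by
  refine ⟨Nat.findGreatest (IsBoundary D b) (u - 1),
    Nat.findGreatest_spec (Nat.zero_le _) (Or.inl rfl), hu,
    (Nat.findGreatest_le _).trans_lt (by omega), fun w hw hvw => ?_⟩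
  by_contra hwu
  exact Nat.findGreatest_is_greatest hvw (by omega) (Or.inr hw)

lemma IsBoundary.induction {P : ℕ → Prop} (h0 : P 0)
    (hstep : ∀ v u, Consecutive D b v u → P v → P u) (hu : IsBoundary D b u) : P u := by
  induction u using Nat.strong_induction_on with
  | _ u ih =>
    rcases Nat.eq_zero_or_pos u with rfl | hpos
    · exact h0
    · obtain ⟨v, hv⟩ := exists_consecutive (hu.resolve_left hpos.ne') hpos
      exact hstep v u hv (ih v hv.2.2.1 hv.1)

end Demands

section Restriction

variable (s : GState N) (π : List (Step N)) (D : Finset (N.Auto × ℕ))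

def IsKeptMove (b : N.Auto) (i : ℕ) (t : N.Trans b) : Prop :=
  ∃ v u, Consecutive D b v u ∧ (i, t) ∈ erasedPath s π b v u

noncomputable def restrictStep (i : ℕ) : Step N :=
  fun b => (stepAt π i b).filter fun t => decide (IsKeptMove s π D b i t)

/-- Dropped moves leave their (possibly empty) steps in place, so time indices are kept. -/
noncomputable def restrictTrace : List (Step N) :=
  (List.range π.length).map (restrictStep s π D)

def DemandClosed : Prop :=
  ∀ b i t, IsKeptMove s π D b i t → ∀ c k, t.enab c = some k → (c, i) ∈ D

variable {s π D} {b : N.Auto} {i : ℕ} {t : N.Trans b}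

lemma restrictStep_eq_some_iff :
    restrictStep s π D i b = some t ↔ stepAt π i b = some t ∧ IsKeptMove s π D b i t := by
  simp [restrictStep, Option.filter_eq_some_iff]

lemma length_restrictTrace : (restrictTrace s π D).length = π.length := by
  simp [restrictTrace]

lemma stepAt_restrictTrace (i : ℕ) : stepAt (restrictTrace s π D) i = restrictStep s π D i := by
  rcases lt_or_ge i π.length with h | h
  · rw [stepAt_of_lt (length_restrictTrace.symm ▸ h)]
    simp [restrictTrace]
  · rw [stepAt_of_length_le (length_restrictTrace.symm ▸ h)]
    funext b
    simp [restrictStep, stepAt_of_length_le h]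

lemma subTrace_restrictTrace : SubTrace (restrictTrace s π D) π := by
  refine ⟨Fin.cast length_restrictTrace, fun _ _ h => h, fun i a t ht => ?_⟩
  have hi : i.1 < π.length := i.2.trans_eq length_restrictTrace
  rw [← stepAt_of_lt i.2, stepAt_restrictTrace, restrictStep_eq_some_iff] at ht
  simpa [stepAt_of_lt hi] using ht.1

lemma isKeptMove_iff {v u : ℕ} (h : Consecutive D b v u) (hvi : v ≤ i) (hiu : i < u) :
    IsKeptMove s π D b i t ↔ (i, t) ∈ erasedPath s π b v u := by
  refine ⟨fun ⟨v', u', h', hmem⟩ => ?_, fun hmem => ⟨v, u, h, hmem⟩⟩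
  obtain ⟨hvi', hiu', -⟩ := mem_erasedPath hmem
  obtain ⟨rfl, rfl⟩ := h.unique h' hvi hiu hvi' hiu'
  exact hmem

lemma stepAt_restrictTrace_eq_some_iff {v u : ℕ} (h : Consecutive D b v u) (hvi : v ≤ i)
    (hiu : i < u) :
    stepAt (restrictTrace s π D) i b = some t ↔ (i, t) ∈ erasedPath s π b v u := by
  rw [stepAt_restrictTrace, restrictStep_eq_some_iff, isKeptMove_iff h hvi hiu]
  exact and_iff_right_of_imp fun hmem => (mem_erasedPath hmem).2.2

variable {T : TransMap N}

lemma stateAt_restrictTrace_of_consecutive (htr : IsTrace T s π) {v u : ℕ}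
    (h : Consecutive D b v u) (hv : stateAt s (restrictTrace s π D) v b = stateAt s π v b) :
    (∀ p ∈ erasedPath s π b v u, stateAt s (restrictTrace s π D) p.1 b = p.2.orig) ∧
      stateAt s (restrictTrace s π D) u b = stateAt s π u b :=
  stateAt_along_simplePath (simplePath_erasedPath htr h.2.2.1.le) erasedPath_pairwise
    (fun _ hp => ⟨(mem_erasedPath hp).1, (mem_erasedPath hp).2.1⟩) h.2.2.1.le
    (fun _ _ hvi hiu => stepAt_restrictTrace_eq_some_iff h hvi hiu) hv

lemma stateAt_restrictTrace_of_isBoundary (htr : IsTrace T s π) {v : ℕ}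
    (hv : IsBoundary D b v) : stateAt s (restrictTrace s π D) v b = stateAt s π v b :=
  hv.induction (P := fun v => stateAt s (restrictTrace s π D) v b = stateAt s π v b) rfl
    fun _ _ h ih => (stateAt_restrictTrace_of_consecutive htr h ih).2

lemma stateAt_restrictTrace_of_isKeptMove (htr : IsTrace T s π) (h : IsKeptMove s π D b i t) :
    stateAt s (restrictTrace s π D) i b = t.orig := by
  obtain ⟨v, u, hvu, hmem⟩ := h
  exact (stateAt_restrictTrace_of_consecutive htr hvu
    (stateAt_restrictTrace_of_isBoundary htr hvu.1)).1 _ hmem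

lemma isTrace_restrictTrace (htr : IsTrace T s π) (hD : DemandClosed s π D) :
    IsTrace T s (restrictTrace s π D) := by
  refine isTrace_iff.2 fun n _ => ⟨fun a t ht => ?_, playable_iff.2 fun a t ht => ?_⟩
  · rw [stepAt_restrictTrace, restrictStep_eq_some_iff] at ht
    exact htr.mem_transMap ht.1
  · rw [stepAt_restrictTrace, restrictStep_eq_some_iff] at ht
    refine ⟨stateAt_restrictTrace_of_isKeptMove htr ht.2, fun c k hk => ?_⟩
    rw [stateAt_restrictTrace_of_isBoundary htr (Or.inr (hD a n t ht.2 c k hk))]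
    exact (htr.playable_stateAt ht.1).2 c k hk

end Restriction

section Minimality

variable {T : TransMap N} {s : GState N} {π : List (Step N)} {D : Finset (N.Auto × ℕ)}
  {g : N.Auto} {gtop : N.LS g}

lemma mem_tracePost_restrictTrace (htr : IsTrace T s π) (hD : DemandClosed s π D)
    (hgD : (g, π.length) ∈ D) (hgoal : (⟨g, gtop⟩ : N.LSt) ∈ tracePost π) (hg : s g ≠ gtop) :
    (⟨g, gtop⟩ : N.LSt) ∈ tracePost (restrictTrace s π D) := by
  have hfinal : stateAt s (restrictTrace s π D) (restrictTrace s π D).length g = gtop := by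
    rw [length_restrictTrace, stateAt_restrictTrace_of_isBoundary htr (Or.inr hgD),
      htr.stateAt_length_of_mem_tracePost hgoal]
  exact hfinal ▸ (isTrace_restrictTrace htr hD).mem_tracePost_of_ne (hfinal ▸ hg.symm)

lemma MinimalTrace.isKeptMove (hπ : MinimalTrace T s ⟨g, gtop⟩ π) (hD : DemandClosed s π D)
    (hgD : (g, π.length) ∈ D) (hg : s g ≠ gtop) {b : N.Auto} {i : ℕ} {t : N.Trans b}
    (h : stepAt π i b = some t) : IsKeptMove s π D b i t := by
  obtain ⟨htr, hgoal, hmin⟩ := hπ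
  have heq : restrictTrace s π D = π := by
    by_contra hne
    exact hmin ⟨_, isTrace_restrictTrace htr hD, hne, length_restrictTrace.le,
      mem_tracePost_restrictTrace htr hD hgD hgoal hg, subTrace_restrictTrace⟩
  have hstep : restrictStep s π D i b = some t := by rw [← stepAt_restrictTrace, heq, h]
  exact (restrictStep_eq_some_iff.1 hstep).2

end Minimality

section DemandIteration

variable (s : GState N) (π : List (Step N)) (g : N.Auto)

noncomputable def conditionDemands (D : Finset (N.Auto × ℕ)) : Finset (N.Auto × ℕ) :=
  (Finset.univ ×ˢ Finset.range π.length).filter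
    fun p => ∃ b t, IsKeptMove s π D b p.2 t ∧ (t.enab p.1).isSome

/-- Kept moves depend on the demands, whence the iteration. -/
noncomputable def demands : ℕ → Finset (N.Auto × ℕ)
  | 0 => {(g, π.length)}
  | k + 1 => demands k ∪ conditionDemands s π (demands k)

variable {s π g}

lemma monotone_demands : Monotone (demands s π g) :=
  monotone_nat_of_le_succ fun _ => Finset.subset_union_left

lemma goal_mem_demands (k : ℕ) : (g, π.length) ∈ demands s π g k :=
  monotone_demands (Nat.zero_le k) (Finset.mem_singleton_self _)

lemma demands_subset (k : ℕ) :
    demands s π g k ⊆ Finset.univ ×ˢ Finset.range (π.length + 1) := by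
  induction k with
  | zero => simp [demands]
  | succ k ih =>
    refine Finset.union_subset ih fun p hp => ?_
    simp only [conditionDemands, Finset.mem_filter, Finset.mem_product, Finset.mem_range] at hp ⊢
    exact ⟨hp.1.1, by omega⟩

lemma exists_demands_succ_eq : ∃ k, demands s π g (k + 1) = demands s π g k := by
  set U : Finset (Finset (N.Auto × ℕ)) := (Finset.univ ×ˢ Finset.range (π.length + 1)).powerset
  obtain ⟨k, l, hkl, heq⟩ := Set.Finite.exists_lt_map_eq_of_forall_mem (f := demands s π g)
    (t := (U : Set (Finset (N.Auto × ℕ)))) (fun k => Finset.mem_powerset.2 (demands_subset k))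
    U.finite_toSet
  exact ⟨k, ((monotone_demands hkl).trans_eq heq.symm).antisymm (monotone_demands k.le_succ)⟩

lemma demandClosed_of_demands_succ_eq {k : ℕ} (h : demands s π g (k + 1) = demands s π g k) :
    DemandClosed s π (demands s π g k) := by
  intro b i t hkept c x hx
  have hi : i < π.length := by
    obtain ⟨v, u, -, hmem⟩ := hkept
    exact lt_length_of_stepAt_eq_some (mem_erasedPath hmem).2.2
  rw [← h]
  refine Finset.mem_union_right _ (Finset.mem_filter.2 ⟨?_, b, t, hkept, by simp [hx]⟩)
  simp [hi]

end DemandIteration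

section Justification

variable {T : TransMap N} {s : GState N} {π : List (Step N)} {Ω : Set (Obj N)}
  {B : Set (Obj N)} {g : N.Auto} {gtop : N.LS g} {D : Finset (N.Auto × ℕ)}

/-- Induction over the demand intervals of `b`: across `[v, u)` the loop-erased moves solve the
objective from the state at `v` to the demanded state at `u`, and the last of them, a transition
of `tr(B)` entering the state at `u`, lets closure rule (3) move the source of objectives. -/
lemma objective_mem_of_isBoundary (htr : IsTrace T s π) (hΩ : Fop T s Ω ⊆ Ω)
    (hB : BClosed T s Ω g gtop B)
    (hD : ∀ p ∈ D, (⟨p.1, (s p.1, stateAt s π p.2 p.1)⟩ : Obj N) ∈ B) {b : N.Auto} {v : ℕ}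
    (hv : IsBoundary D b v) {y : N.LS b} (hy : (⟨b, (s b, y)⟩ : Obj N) ∈ B) :
    (⟨b, (stateAt s π v b, y)⟩ : Obj N) ∈ B := by
  refine hv.induction (P := fun v => ∀ y, (⟨b, (s b, y)⟩ : Obj N) ∈ B →
    (⟨b, (stateAt s π v b, y)⟩ : Obj N) ∈ B) (fun _ hy => hy) (fun v u hvu ih y hy => ?_) y hy
  by_cases heq : stateAt s π v b = stateAt s π u b
  · exact heq ▸ ih y hy
  have hobj := ih _ (hD (b, u) hvu.2.1)
  have hpath := simplePath_erasedPath (b := b) htr hvu.2.2.1.le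
  have hne : (erasedPath s π b v u).map Prod.snd ≠ [] := fun hnil =>
    heq (hnil ▸ hpath).eq_of_nil
  obtain ⟨p, hp, hlast⟩ := List.mem_map.1 (List.getLast_mem hne)
  have hdest := hpath.getLast_dest hne
  rw [← hlast] at hdest
  exact hdest ▸ hB.2.2 b p.2 (mem_trB_of_mem_erasedPath htr hΩ hobj hp) (s b) y hy

lemma mem_trB_of_isKeptMove (htr : IsTrace T s π) (hΩ : Fop T s Ω ⊆ Ω)
    (hB : BClosed T s Ω g gtop B)
    (hD : ∀ p ∈ D, (⟨p.1, (s p.1, stateAt s π p.2 p.1)⟩ : Obj N) ∈ B) {b : N.Auto} {i : ℕ}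
    {t : N.Trans b} (h : IsKeptMove s π D b i t) : (⟨b, t⟩ : Σ a, N.Trans a) ∈ trB T s Ω B := by
  obtain ⟨v, u, hvu, hmem⟩ := h
  exact mem_trB_of_mem_erasedPath htr hΩ
    (objective_mem_of_isBoundary htr hΩ hB hD hvu.1 (hD (b, u) hvu.2.1)) hmem

lemma objective_mem_of_mem_demands (htr : IsTrace T s π) (hΩ : Fop T s Ω ⊆ Ω)
    (hB : BClosed T s Ω g gtop B) (hgoal : (⟨g, gtop⟩ : N.LSt) ∈ tracePost π) (k : ℕ) :
    ∀ p ∈ demands s π g k, (⟨p.1, (s p.1, stateAt s π p.2 p.1)⟩ : Obj N) ∈ B := by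
  induction k with
  | zero =>
    rintro _ hp
    obtain rfl := Finset.mem_singleton.1 hp
    rw [htr.stateAt_length_of_mem_tracePost hgoal]
    exact hB.1
  | succ k ih =>
    rintro ⟨c, i⟩ hp
    rcases Finset.mem_union.1 hp with hp | hp
    · exact ih _ hp
    obtain ⟨-, b, t, hkept, hsome⟩ := Finset.mem_filter.1 hp
    obtain ⟨x, hx⟩ := Option.isSome_iff_exists.1 hsome
    have hstep : stepAt π i b = some t := by
      obtain ⟨v, u, -, hmem⟩ := hkept
      exact (mem_erasedPath hmem).2.2
    rw [(htr.playable_stateAt hstep).2 c x hx]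
    exact hB.2.1 b t (mem_trB_of_isKeptMove htr hΩ hB ih hkept) c x hx

end Justification

end AN

open AN

/-- **Theorem 1** (goal-oriented reduction preserves minimal traces):
every minimal trace `π` from `s` reaching the goal `g_⊤` only uses
transitions of `tr(B)`. -/
theorem goal_oriented_reduction_preserves_minimal_traces
    (N : AN) (T : TransMap N) (s : GState N)
    (g : N.Auto) (gtop : N.LS g) (hg : s g ≠ gtop)
    (Ω : Set (Obj N)) (hΩ : IsLeast {W : Set (Obj N) | Fop T s W = W} Ω)
    (B : Set (Obj N)) (hB : IsLeast {B' : Set (Obj N) | BClosed T s Ω g gtop B'} B)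
    (π : List (Step N)) (hπ : MinimalTrace T s ⟨g, gtop⟩ π) :
    traceTrans π ⊆ trB T s Ω B := by
  have htr : IsTrace T s π := hπ.1
  have hvalid : Fop T s Ω ⊆ Ω := hΩ.1.le
  obtain ⟨k, hk⟩ := exists_demands_succ_eq (s := s) (π := π) (g := g)
  have hjustified := objective_mem_of_mem_demands htr hvalid hB.1 hπ.2.1 k
  rintro ⟨b, t⟩ ⟨τ, hτ, hτt⟩
  obtain ⟨i, hi, rfl⟩ := List.getElem_of_mem hτ
  have hstep : stepAt π i b = some t := by rw [stepAt_of_lt hi]; exact hτt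
  exact mem_trB_of_isKeptMove htr hvalid hB.1 hjustified
    (hπ.isKeptMove (demandClosed_of_demands_succ_eq hk) (goal_mem_demands k) hg hstep)
end

section
/- Existence of minimal sub-traces: Let (Σ,S,T) be an automata network, s a global state and g_⊤ a local state. For every trace π from s with g_⊤ ∈ post(π), there exists a trace ϖ from s that is minimal w.r.t. g_⊤ reachability and a strictly order-preserving injection φ: [1;|ϖ|] → [1;|π|] such that ϖ^i ⊆ π^{φ(i)} for all i ∈ [1;|ϖ|]. -/
/-!
Automata networks (ANs), steps, traces, minimal traces, local causality analysis
and the goal-oriented reduction, following Paulevé, "Goal-Oriented Reduction of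
Automata Networks".
-/

universe u v

open AN

/-!
A proper sub-trace has strictly smaller weight, counting one for each step and one for each
transition, so a sub-trace of `π` of least weight among those reaching `p` is minimal.
-/

theorem Fintype.sum_comp_lt_sum_of_not_surjective {ι κ : Type*} [Fintype ι] [Fintype κ]
    {φ : ι → κ} (hφ : φ.Injective) (hsurj : ¬ φ.Surjective) {g : κ → ℕ}
    (hg : ∀ j, 0 < g j) :
    ∑ i, g (φ i) < ∑ j, g j := by
  classical
  obtain ⟨j, hj⟩ := not_forall.mp hsurj
  rw [← Finset.sum_image fun a _ b _ hab => hφ hab]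
  exact Finset.sum_lt_sum_of_subset (Finset.subset_univ _) (Finset.mem_univ j)
    (by simpa using hj) (hg j) fun _ _ _ => Nat.zero_le _

theorem List.eq_of_get_eq_comp_of_bijective {α : Type*} {l₁ l₂ : List α}
    {φ : Fin l₁.length → Fin l₂.length} (hφ : StrictMono φ) (hbij : φ.Bijective)
    (h : ∀ i, l₁.get i = l₂.get (φ i)) : l₁ = l₂ := by
  let e := hφ.orderIsoOfSurjective φ hbij.surjective
  have hval : ∀ i, (φ i : ℕ) = i := Fin.coe_orderIso_apply e
  refine List.ext_get (by simpa using Fintype.card_congr e.toEquiv) fun n h₁ h₂ => ?_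
  simpa [hval] using h ⟨n, h₁⟩

namespace AN

variable {N : AN}

def Step.support (τ : Step N) : Finset N.Auto :=
  Finset.univ.filter fun a => (τ a).isSome

def Step.weight (τ : Step N) : ℕ :=
  τ.support.card + 1

def traceWeight (π : List (Step N)) : ℕ :=
  ∑ i : Fin π.length, (π.get i).weight

theorem Step.Sub.support_subset {σ τ : Step N} (h : σ.Sub τ) : σ.support ⊆ τ.support := by
  intro a
  simp only [Step.support, Finset.mem_filter, Finset.mem_univ, true_and, Option.isSome_iff_exists]
  exact fun ⟨t, ht⟩ => ⟨t, h ht⟩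

theorem Step.Sub.support_ssubset {σ τ : Step N} (h : σ.Sub τ) (hne : σ ≠ τ) :
    σ.support ⊂ τ.support := by
  refine h.support_subset.ssubset_of_ne fun heq => hne (funext fun a => ?_)
  cases hσ : σ a with
  | some t => exact (h hσ).symm
  | none =>
    have ha : a ∉ τ.support := heq ▸ by simp [Step.support, hσ]
    exact (by simpa [Step.support] using ha : τ a = none).symm

theorem Step.Sub.weight_le {σ τ : Step N} (h : σ.Sub τ) : σ.weight ≤ τ.weight :=
  Nat.add_le_add_right (Finset.card_le_card h.support_subset) 1

theorem Step.Sub.weight_lt {σ τ : Step N} (h : σ.Sub τ) (hne : σ ≠ τ) :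
    σ.weight < τ.weight :=
  Nat.add_lt_add_right (Finset.card_lt_card (h.support_ssubset hne)) 1

theorem SubTrace.refl (π : List (Step N)) : SubTrace π π :=
  ⟨id, strictMono_id, fun _ _ _ h => h⟩

theorem SubTrace.trans {π₁ π₂ π₃ : List (Step N)} (h₁₂ : SubTrace π₁ π₂)
    (h₂₃ : SubTrace π₂ π₃) : SubTrace π₁ π₃ := by
  obtain ⟨φ, hφ, hsub⟩ := h₁₂
  obtain ⟨ψ, hψ, hsub'⟩ := h₂₃
  exact ⟨ψ ∘ φ, hψ.comp hφ, fun i _ _ h => hsub' (φ i) (hsub i h)⟩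

theorem SubTrace.traceWeight_lt {ϖ π : List (Step N)} (h : SubTrace ϖ π) (hne : ϖ ≠ π) :
    traceWeight ϖ < traceWeight π := by
  obtain ⟨φ, hφ, hsub⟩ := h
  by_cases hsurj : φ.Surjective
  · have hbij : φ.Bijective := ⟨hφ.injective, hsurj⟩
    obtain ⟨i, hi⟩ : ∃ i, ϖ.get i ≠ π.get (φ i) := by
      by_contra! hall
      exact hne (List.eq_of_get_eq_comp_of_bijective hφ hbij hall)
    calc traceWeight ϖ
        < ∑ i, (π.get (φ i)).weight :=
          Finset.sum_lt_sum (fun i _ => (hsub i).weight_le)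
            ⟨i, Finset.mem_univ i, (hsub i).weight_lt hi⟩
      _ = traceWeight π := Fintype.sum_bijective φ hbij _ _ fun _ => rfl
  · calc traceWeight ϖ
        ≤ ∑ i, (π.get (φ i)).weight := Finset.sum_le_sum fun i _ => (hsub i).weight_le
      _ < traceWeight π :=
          Fintype.sum_comp_lt_sum_of_not_surjective hφ.injective hsurj
            (g := fun j => (π.get j).weight) fun _ => Nat.succ_pos _

end AN

/-- **Existence of minimal sub-traces**: every trace reaching a local state `p`
contains a sub-trace which is a minimal trace for `p` reachability. -/
theorem exists_minimal_subtrace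
    (N : AN) (T : TransMap N) (s : GState N) (p : N.LSt)
    (π : List (Step N)) (hπ : IsTrace T s π) (hp : p ∈ tracePost π) :
    ∃ ϖ : List (Step N), MinimalTrace T s p ϖ ∧ SubTrace ϖ π := by
  obtain ⟨ϖ, ⟨hϖ, hpϖ, hϖπ⟩, hmin⟩ := (measure traceWeight).wf.has_min
    {ϖ | IsTrace T s ϖ ∧ p ∈ tracePost ϖ ∧ SubTrace ϖ π} ⟨π, hπ, hp, .refl π⟩
  refine ⟨ϖ, ⟨hϖ, hpϖ, ?_⟩, hϖπ⟩
  rintro ⟨ϖ', hϖ', hne, -, hpϖ', hsub⟩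
  exact hmin ϖ' ⟨hϖ', hpϖ', hsub.trans hϖπ⟩ (hsub.traceWeight_lt hne)
end

section
/- Property 1 (traces follow local acyclic paths): Let (Σ,S,T) be an automata network and π a trace from a global state s. For any a ∈ Σ, a_i, a_j ∈ S(a), and indices 1 ≤ n ≤ m ≤ |π| with a_i ∈ •π^n and a_j ∈ (π^m)•, there exists a local acyclic path η ∈ local-paths(a_i↝a_j) that is a sub-sequence of π^{n..m}, i.e., there is an injection φ: [1;|η|] → [n;m] such that φ is strictly order-preserving and η^u ∈ π^{φ(u)} for all u ∈ [1;|η|]. -/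
/-!
Automata networks (ANs), steps, traces, minimal traces, local causality analysis
and the goal-oriented reduction, following Paulevé, "Goal-Oriented Reduction of
Automata Networks".
-/

universe u v

open AN

/-!
The transitions of automaton `a` fired by `π` in steps `n, …, m` form a walk of local
transitions from the state of `a` before step `n`, which is `a_i` since `π^n` is playable, to
its state after step `m`, which is `a_j` since `a_j ∈ (π^m)•`. Shortcutting the cycles of this
walk leaves an acyclic walk with the same endpoints, i.e. a local acyclic path, and it is a
sublist of the original one, so tagging each transition with the index of its step gives the
order-preserving injection into `[n; m]`.
-/

section Walk

variable {V E : Type*} (src tgt : E → V)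

def IsWalk : V → V → List E → Prop
  | x, y, [] => x = y
  | x, y, e :: w => src e = x ∧ IsWalk (tgt e) y w

variable {src tgt}

theorem IsWalk.append_singleton {x y : V} {w : List E} {e : E} (hw : IsWalk src tgt x y w)
    (he : src e = y) : IsWalk src tgt x (tgt e) (w ++ [e]) := by
  induction w generalizing x with
  | nil => exact ⟨hw ▸ he, rfl⟩
  | cons f w ih => exact ⟨hw.1, ih hw.2⟩

theorem IsWalk.of_append_cons {x y : V} {w₁ w₂ : List E} {e : E}
    (hw : IsWalk src tgt x y (w₁ ++ e :: w₂)) : IsWalk src tgt (tgt e) y w₂ := by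
  induction w₁ generalizing x with
  | nil => exact hw.2
  | cons f w₁ ih => exact ih hw.2

theorem IsWalk.isChain {x y : V} {w : List E} (hw : IsWalk src tgt x y w) :
    w.IsChain fun e f => tgt e = src f := by
  induction w generalizing x with
  | nil => exact .nil
  | cons e w ih =>
    cases w with
    | nil => exact .singleton e
    | cons f w => exact .cons_cons hw.2.1.symm (ih hw.2)

theorem IsWalk.tgt_getLast {x y : V} {w : List E} (hw : IsWalk src tgt x y w) (hne : w ≠ []) :
    tgt (w.getLast hne) = y := by
  induction w generalizing x with
  | nil => exact absurd rfl hne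
  | cons e w ih =>
    cases w with
    | nil => exact hw.2
    | cons f w => exact ih hw.2 (List.cons_ne_nil f w)

theorem isWalk_map {F : Type*} (f : F → E) {x y : V} {w : List F} :
    IsWalk src tgt x y (w.map f) ↔ IsWalk (src ∘ f) (tgt ∘ f) x y w := by
  induction w generalizing x with
  | nil => rfl
  | cons e w ih => exact and_congr Iff.rfl ih

/-- An edge whose source is visited again later is skipped together with the cycle it
starts. -/
theorem IsWalk.exists_acyclic_sublist {x y : V} {w : List E} (hw : IsWalk src tgt x y w) :
    ∃ w', w'.Sublist w ∧ IsWalk src tgt x y w' ∧ w'.Pairwise fun e f => tgt f ≠ src e := by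
  induction w generalizing x with
  | nil => exact ⟨[], .slnil, hw, .nil⟩
  | cons e w ih =>
    obtain ⟨hsrc, hw⟩ := hw
    obtain ⟨w', hsub, hw', hacyc⟩ := ih hw
    by_cases hrevisit : ∃ f ∈ w', tgt f = x
    · obtain ⟨f, hf, rfl⟩ := hrevisit
      obtain ⟨w₁, w₂, rfl⟩ := List.append_of_mem hf
      have hsuffix : w₂.Sublist (w₁ ++ f :: w₂) :=
        List.sublist_append_of_sublist_right (List.sublist_cons_self f w₂)
      exact ⟨w₂, (hsuffix.trans hsub).cons e, hw'.of_append_cons, hacyc.sublist hsuffix⟩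
    by_cases hloop : tgt e = x
    · exact ⟨w', hsub.cons e, hloop ▸ hw', hacyc⟩
    push Not at hrevisit
    exact ⟨e :: w', hsub.cons_cons e, ⟨hsrc, hw'⟩,
      List.pairwise_cons.2 ⟨fun f hf => hsrc ▸ hrevisit f hf, hacyc⟩⟩

end Walk

theorem List.exists_strictMono_of_pairwise_fst_lt {α : Type*} {w : List (ℕ × α)}
    (hw : w.Pairwise fun p q => p.1 < q.1) :
    ∃ φ : Fin (w.map Prod.snd).length → ℕ, StrictMono φ ∧
      ∀ u, (φ u, (w.map Prod.snd).get u) ∈ w := by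
  have hlen : (w.map Prod.snd).length = w.length := List.length_map _
  refine ⟨fun u => (w.get (u.cast hlen)).1, fun u v huv => ?_, fun u => ?_⟩
  · exact List.pairwise_iff_get.1 hw _ _ huv
  · simp

namespace AN

variable {N : AN}

theorem Step.mem_pre_of_eq_some {τ : Step N} {b : N.Auto} {t : N.Trans b} (h : τ b = some t)
    {p : N.LSt} (hp : p ∈ t.preSet) : p ∈ τ.pre :=
  Set.mem_iUnion.2 ⟨b, Set.mem_iUnion.2 ⟨t, Set.mem_iUnion.2 ⟨h, hp⟩⟩⟩

theorem applyStep_of_eq_some (s : GState N) {τ : Step N} {b : N.Auto} {t : N.Trans b}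
    (h : τ b = some t) : applyStep s τ b = t.dest := by
  simp [applyStep, h]

theorem applyStep_of_eq_none (s : GState N) {τ : Step N} {b : N.Auto} (h : τ b = none) :
    applyStep s τ b = s b := by
  simp [applyStep, h]

/-- A local state in `τ•` is either the destination of a transition of `τ`, or an enabling
condition of `τ` whose automaton `τ` does not move. -/
theorem Playable.applyStep_eq_of_mem_post {s : GState N} {τ : Step N} (hτ : Playable s τ)
    {b : N.Auto} {x : N.LS b} (h : (⟨b, x⟩ : N.LSt) ∈ τ.post) : applyStep s τ b = x := by
  obtain ⟨hin, hnot⟩ := h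
  simp only [Set.mem_iUnion] at hin
  obtain ⟨c, t, hct, hdest | henab⟩ := hin
  · cases hdest
    exact applyStep_of_eq_some s hct
  · have hx : s b = x := hτ _ (Step.mem_pre_of_eq_some hct (Or.inr henab))
    cases hb : τ b with
    | none => rw [applyStep_of_eq_none s hb, hx]
    | some t' =>
      have horig : s b = t'.orig := hτ _ (Step.mem_pre_of_eq_some hb (Set.mem_insert _ _))
      exact absurd ⟨t', hb, hx.symm.trans horig⟩ hnot

theorem applyTrace_take_succ (s : GState N) (π : List (Step N)) {k : ℕ} (hk : k < π.length) :
    applyTrace s (π.take (k + 1)) = applyStep (applyTrace s (π.take k)) π[k] := by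
  rw [applyTrace, List.take_add_one, List.getElem?_eq_getElem hk, Option.toList_some,
    List.foldl_append]
  rfl

theorem IsTrace.exists_walk {T : TransMap N} {s : GState N} {π : List (Step N)}
    (hπ : IsTrace T s π) (a : N.Auto) {n k : ℕ} (hnk : n ≤ k) (hk : k ≤ π.length) :
    ∃ w : List (ℕ × N.Trans a),
      IsWalk (Trans.orig ∘ Prod.snd) (Trans.dest ∘ Prod.snd)
        (applyTrace s (π.take n) a) (applyTrace s (π.take k) a) w ∧
      w.Pairwise (fun p q => p.1 < q.1) ∧
      ∀ p ∈ w, n ≤ p.1 ∧ p.1 < k ∧ ∃ h : p.1 < π.length, π[p.1] a = some p.2 := by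
  induction k, hnk using Nat.le_induction with
  | base => exact ⟨[], rfl, .nil, by simp⟩
  | succ k _ ih =>
    have hk' : k < π.length := hk
    obtain ⟨w, hw, hinc, hfired⟩ := ih hk'.le
    rw [applyTrace_take_succ s π hk']
    cases hτ : π[k] a with
    | none =>
      refine ⟨w, by rwa [applyStep_of_eq_none _ hτ], hinc, fun p hp => ?_⟩
      obtain ⟨hnp, hpk, hp⟩ := hfired p hp
      exact ⟨hnp, by omega, hp⟩
    | some t =>
      have horig : applyTrace s (π.take k) a = t.orig :=
        (hπ k hk').2 _ (Step.mem_pre_of_eq_some hτ (Set.mem_insert _ _))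
      refine ⟨w ++ [(k, t)], ?_, ?_, fun p hp => ?_⟩
      · rw [applyStep_of_eq_some _ hτ]
        exact hw.append_singleton (e := (k, t)) horig.symm
      · exact List.pairwise_append.2 ⟨hinc, List.pairwise_singleton _ _,
          fun p hp q hq => (List.mem_singleton.1 hq) ▸ (hfired p hp).2.1⟩
      · rcases List.mem_append.1 hp with hp | hp
        · obtain ⟨hnp, hpk, hp⟩ := hfired p hp
          exact ⟨hnp, by omega, hp⟩
        · obtain rfl := List.mem_singleton.1 hp
          exact ⟨by omega, k.lt_succ_self, hk', hτ⟩

theorem isLocalPath_of_isWalk {T : TransMap N} {a : N.Auto} {i j : N.LS a}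
    {η : List (N.Trans a)} (hT : ∀ t ∈ η, t ∈ T a) (hη : IsWalk Trans.orig Trans.dest i j η)
    (hacyc : η.Pairwise fun e f => f.dest ≠ e.orig) : IsLocalPath T i j η := by
  refine ⟨hT, ?_⟩
  rcases η with _ | ⟨e, η⟩
  · exact .inl ⟨hη, rfl⟩
  have hlast := hη.tgt_getLast (List.cons_ne_nil e η)
  refine .inr ⟨?_, List.cons_ne_nil e η, hη.1, hlast,
    fun n h => List.isChain_iff_getElem.1 hη.isChain n h,
    fun n m hmn => List.pairwise_iff_get.1 hacyc m n hmn⟩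
  rintro rfl
  rcases List.mem_cons.1 (List.getLast_mem (List.cons_ne_nil e η)) with he | he
  · exact e.orig_ne_dest (hη.1.trans (he ▸ hlast).symm)
  · exact (List.pairwise_cons.1 hacyc).1 _ he (hlast.trans hη.1.symm)

end AN

/-- **Property 1** (traces follow local acyclic paths): if a trace has
`a_i ∈ •π^n` and `a_j ∈ (π^m)•` with `n ≤ m`, then some local acyclic path
`η ∈ local-paths(a_i ↝ a_j)` is a sub-sequence of `π^{n..m}`
(indices are 0-based). -/
theorem trace_follows_local_acyclic_path
    (N : AN) (T : TransMap N) (s : GState N)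
    (π : List (Step N)) (hπ : IsTrace T s π)
    (a : N.Auto) (i j : N.LS a)
    (n m : ℕ) (hnm : n ≤ m) (hm : m < π.length)
    (hi : (⟨a, i⟩ : N.LSt) ∈ (π.get ⟨n, lt_of_le_of_lt hnm hm⟩).pre)
    (hj : (⟨a, j⟩ : N.LSt) ∈ (π.get ⟨m, hm⟩).post) :
    ∃ η : List (N.Trans a), IsLocalPath T i j η ∧
      ∃ φ : Fin η.length → ℕ, StrictMono φ ∧
        (∀ u : Fin η.length, n ≤ φ u ∧ φ u ≤ m) ∧
        ∀ u : Fin η.length, ∃ h : φ u < π.length,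
          (π.get ⟨φ u, h⟩) a = some (η.get u) := by
  have hi' : applyTrace s (π.take n) a = i := (hπ n _).2 _ hi
  have hj' : applyTrace s (π.take (m + 1)) a = j := by
    rw [applyTrace_take_succ s π hm]
    exact (hπ m hm).2.applyStep_eq_of_mem_post hj
  obtain ⟨w, hw, hinc, hfired⟩ := hπ.exists_walk a (hnm.trans m.le_succ) hm
  obtain ⟨w', hsub, hw', hacyc⟩ := hw.exists_acyclic_sublist
  obtain ⟨φ, hφ, hgraph⟩ := List.exists_strictMono_of_pairwise_fst_lt (hinc.sublist hsub)
  have hfired' : ∀ p ∈ w', _ := fun p hp => hfired p (hsub.subset hp)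
  refine ⟨w'.map Prod.snd, isLocalPath_of_isWalk ?_ ?_ ?_, φ, hφ,
    fun u => ⟨(hfired' _ (hgraph u)).1, Nat.le_of_lt_succ (hfired' _ (hgraph u)).2.1⟩,
    fun u => (hfired' _ (hgraph u)).2.2⟩
  · intro t ht
    obtain ⟨p, hp, rfl⟩ := List.mem_map.1 ht
    obtain ⟨-, -, hlt, hp⟩ := hfired' p hp
    exact (hπ p.1 hlt).1 hp
  · exact (isWalk_map Prod.snd).2 (hi' ▸ hj' ▸ hw')
  · exact List.pairwise_map.2 hacyc
end

section
/- The last step of a minimal trace is the singleton reaching the goal: Let (Σ,S,T) be an automata network, s a global state, and g_⊤ ∈ S(g) a local state with g_⊤ ∉ s. If π is a trace from s that is minimal w.r.t. g_⊤ reachability, then |π| ≥ 1 and the last step π^{|π|} is a singleton {t} for some transition t ∈ T(g) with dest(t) = g_⊤. -/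
/-!
Automata networks (ANs), steps, traces, minimal traces, local causality analysis
and the goal-oriented reduction, following Paulevé, "Goal-Oriented Reduction of
Automata Networks".
-/

universe u v

/-!
The goal `g_⊤ ∉ s` enters `post(π)` as the destination of a transition `t` of `g` played in
some step `π^k`: if it only occurred in an enabling condition, it would already hold before
that step, hence be reached by an earlier one. Then `π^1 ⋯ π^(k-1) {t}` is a trace reaching
`g_⊤` and a sub-trace of `π`, so minimality forces it to be `π` itself.
-/

namespace AN

variable {N : AN}

def Step.single {a : N.Auto} (t : N.Trans a) : Step N :=
  Function.update (fun _ => none) a (some t)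

@[simp]
lemma Step.single_self {a : N.Auto} (t : N.Trans a) : Step.single t a = some t :=
  Function.update_self ..

lemma Step.single_of_ne {a b : N.Auto} (t : N.Trans a) (h : b ≠ a) : Step.single t b = none :=
  Function.update_of_ne h ..

lemma Step.single_sub {τ : Step N} {a : N.Auto} {t : N.Trans a} (h : τ a = some t) :
    (Step.single t).Sub τ := by
  intro b u hu
  by_cases hb : b = a
  · subst hb
    rw [Step.single_self, Option.some_inj] at hu
    rwa [← hu]
  · rw [Step.single_of_ne t hb] at hu
    cases hu

lemma Step.mem_post_single {a : N.Auto} (t : N.Trans a) :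
    (⟨a, t.dest⟩ : N.LSt) ∈ (Step.single t).post := by
  refine ⟨Set.mem_iUnion₂_of_mem (i := a) (j := t) ?_, ?_⟩
  · exact Set.mem_iUnion_of_mem (Step.single_self t) (Set.mem_insert _ _)
  · rintro ⟨u, hu, horig⟩
    rw [Step.single_self, Option.some_inj] at hu
    subst hu
    exact t.orig_ne_dest horig.symm

lemma Step.exists_dest_eq_or_mem_pre_of_mem_post {τ : Step N} {a : N.Auto} {x : N.LS a}
    (h : (⟨a, x⟩ : N.LSt) ∈ τ.post) :
    (∃ t : N.Trans a, τ a = some t ∧ t.dest = x) ∨ (⟨a, x⟩ : N.LSt) ∈ τ.pre := by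
  obtain ⟨hin, -⟩ := h
  simp only [Set.mem_iUnion] at hin
  obtain ⟨b, t, hbt, hdest | henab⟩ := hin
  · obtain ⟨rfl, hx⟩ := Sigma.mk.inj_iff.1 hdest
    exact Or.inl ⟨t, hbt, (eq_of_heq hx).symm⟩
  · exact Or.inr (Set.mem_iUnion₂_of_mem (i := b) (j := t)
      (Set.mem_iUnion_of_mem hbt (Or.inr henab)))

lemma Step.pre_mono {σ τ : Step N} (h : σ.Sub τ) : σ.pre ⊆ τ.pre := by
  simp only [Step.pre, Set.iUnion_subset_iff]
  intro b t ht
  exact Set.subset_iUnion₂_of_subset b t (Set.subset_iUnion_of_subset (h ht) subset_rfl)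

lemma Step.Wf.mono {T : TransMap N} {σ τ : Step N} (hτ : τ.Wf T) (h : σ.Sub τ) : σ.Wf T :=
  fun _ _ ht => hτ (h ht)

lemma Playable.mono {s : GState N} {σ τ : Step N} (hτ : Playable s τ) (h : σ.Sub τ) :
    Playable s σ :=
  fun p hp => hτ p (Step.pre_mono h hp)

lemma applyTrace_append_singleton (s : GState N) (L : List (Step N)) (τ : Step N) :
    applyTrace s (L ++ [τ]) = applyStep (applyTrace s L) τ := by
  simp [applyTrace]

lemma exists_trans_to_applyTrace_of_ne {s : GState N} {L : List (Step N)} {a : N.Auto}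
    (h : applyTrace s L a ≠ s a) :
    ∃ k, ∃ hk : k < L.length, ∃ t : N.Trans a, L[k] a = some t ∧ t.dest = applyTrace s L a := by
  induction L using List.reverseRecOn with
  | nil => exact absurd rfl h
  | append_singleton L τ ih =>
    rw [applyTrace_append_singleton] at h ⊢
    cases hτ : τ a with
    | none =>
      simp only [applyStep, hτ, Option.elim_none] at h ⊢
      obtain ⟨k, hk, t, hkt, hdest⟩ := ih h
      exact ⟨k, by simp; omega, t, by rwa [List.getElem_append_left hk], hdest⟩
    | some t =>
      exact ⟨L.length, by simp, t, by simp [hτ], by simp [applyStep, hτ]⟩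

lemma IsTrace.take {T : TransMap N} {s : GState N} {π : List (Step N)} (h : IsTrace T s π)
    (n : ℕ) : IsTrace T s (π.take n) := by
  intro i hi
  have hin : i ≤ n := by simp at hi; omega
  simpa [List.take_take, Nat.min_eq_left hin] using h i (by simp at hi; omega)

lemma isTrace_append_singleton {T : TransMap N} {s : GState N} {L : List (Step N)}
    {τ : Step N} :
    IsTrace T s (L ++ [τ]) ↔ IsTrace T s L ∧ τ.Wf T ∧ Playable (applyTrace s L) τ := by
  constructor
  · intro h
    refine ⟨?_, ?_⟩
    · simpa using h.take L.length
    · simpa using h L.length (by simp)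
  · rintro ⟨hL, hwf, hplay⟩ i hi
    rcases Nat.lt_or_ge i L.length with hi' | hi'
    · simpa [List.getElem_append_left hi', List.take_append_of_le_length hi'.le] using hL i hi'
    · obtain rfl : i = L.length := by simp at hi; omega
      simpa using ⟨hwf, hplay⟩

lemma IsTrace.take_append_singleton_of_sub {T : TransMap N} {s : GState N}
    {π : List (Step N)} (h : IsTrace T s π) {k : ℕ} (hk : k < π.length) {σ : Step N}
    (hσ : σ.Sub π[k]) : IsTrace T s (π.take k ++ [σ]) := by
  obtain ⟨htake, hwf, hplay⟩ :=
    isTrace_append_singleton.1 (List.take_append_getElem hk ▸ h.take (k + 1))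
  exact isTrace_append_singleton.2 ⟨htake, hwf.mono hσ, hplay.mono hσ⟩

lemma exists_trans_to_of_mem_tracePost {T : TransMap N} {s : GState N} {π : List (Step N)}
    (hπ : IsTrace T s π) {a : N.Auto} {x : N.LS a} (hx : s a ≠ x)
    (hmem : (⟨a, x⟩ : N.LSt) ∈ tracePost π) :
    ∃ k, ∃ hk : k < π.length, ∃ t : N.Trans a, π[k] a = some t ∧ t.dest = x := by
  obtain ⟨n, hn, hpost, -⟩ := hmem
  rcases Step.exists_dest_eq_or_mem_pre_of_mem_post hpost with ⟨t, ht, hdest⟩ | hpre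
  · exact ⟨n, hn, t, ht, hdest⟩
  · have hreach : applyTrace s (π.take n) a = x := (hπ n hn).2 _ hpre
    obtain ⟨k, hk, t, hkt, hdest⟩ :=
      exists_trans_to_applyTrace_of_ne (hreach ▸ Ne.symm hx : applyTrace s (π.take n) a ≠ s a)
    have hkn : k < n := by simp at hk; omega
    exact ⟨k, hkn.trans hn, t, by simpa using hkt, hdest.trans hreach⟩

lemma mem_tracePost_append_singleton {L : List (Step N)} {τ : Step N} {p : N.LSt}
    (hp : p ∈ τ.post) : p ∈ tracePost (L ++ [τ]) :=
  ⟨L.length, by simp, by simpa using hp, fun m hm hlt => by simp at hm; omega⟩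

lemma subTrace_take_append_singleton {π : List (Step N)} {k : ℕ} (hk : k < π.length)
    {σ : Step N} (h : σ.Sub π[k]) : SubTrace (π.take k ++ [σ]) π := by
  refine ⟨fun i => ⟨i, by have := i.isLt; simp at this; omega⟩, fun _ _ hij => hij, ?_⟩
  rintro ⟨i, hi⟩
  rcases Nat.lt_or_ge i k with hik | hik
  · have hi' : i < (π.take k).length := by simp; omega
    simp only [List.get_eq_getElem, List.getElem_append_left hi', List.getElem_take]
    exact fun _ _ => id
  · obtain rfl : i = k := by simp at hi; omega
    simpa using h

lemma MinimalTrace.eq_of_subTrace {T : TransMap N} {s : GState N} {p : N.LSt}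
    {π ϖ : List (Step N)} (hπ : MinimalTrace T s p π) (hϖ : IsTrace T s ϖ)
    (hlen : ϖ.length ≤ π.length) (hp : p ∈ tracePost ϖ) (hsub : SubTrace ϖ π) : ϖ = π :=
  by_contra fun hne => hπ.2.2 ⟨ϖ, hϖ, hne, hlen, hp, hsub⟩

end AN

open AN

/-- **The last step of a minimal trace is the singleton reaching the goal**:
if `g_⊤ ∉ s` and `π` is minimal w.r.t. `g_⊤` reachability, then `π` is
nonempty and its last step consists of exactly one transition, a transition of
`T(g)` whose destination is `g_⊤`. -/
theorem minimal_trace_last_step_singleton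
    (N : AN) (T : TransMap N) (s : GState N)
    (g : N.Auto) (gtop : N.LS g) (hg : s g ≠ gtop)
    (π : List (Step N)) (hπ : MinimalTrace T s ⟨g, gtop⟩ π) :
    ∃ hne : π ≠ [], ∃ t : N.Trans g, t ∈ T g ∧ t.dest = gtop ∧
      (π.getLast hne) g = some t ∧
      ∀ b : N.Auto, b ≠ g → (π.getLast hne) b = none := by
  obtain ⟨k, hk, t, hkt, hdest⟩ := exists_trans_to_of_mem_tracePost hπ.1 hg hπ.2.1
  have hsub := Step.single_sub hkt
  have hπ_eq : π.take k ++ [Step.single t] = π :=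
    hπ.eq_of_subTrace (hπ.1.take_append_singleton_of_sub hk hsub) (by simp; omega)
      (mem_tracePost_append_singleton (hdest ▸ Step.mem_post_single t))
      (subTrace_take_append_singleton hk hsub)
  have hne : π ≠ [] := hπ_eq ▸ List.concat_ne_nil _ _
  have hlast : π.getLast hne = Step.single t :=
    (List.getLast_congr _ _ hπ_eq.symm).trans (List.getLast_append_singleton _)
  exact ⟨hne, t, (hπ.1 k hk).1 hkt, hdest, by rw [hlast, Step.single_self],
    fun b hb => by rw [hlast, Step.single_of_ne t hb]⟩
end
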